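/- Let Q be an acyclic cluster quiver with n vertices such that (1,2,…,n) is an admissible numbering of its vertices by sources, and for 1 ≤ k ≤ n set R^{(k)} = μ_k∘⋯∘μ_1(Q̂). Then for every 1 ≤ k ≤ n the set of green vertices of R^{(k)} is exactly {k+1,…,n}. -/

import Mathlib

/-!
Common framework: a cluster quiver `Q` with vertex set `{1,…,n}` is encoded by its
skew-symmetric adjacency matrix `B : Fin n → Fin n → ℤ`.  Extended (framed-type)
matrices are `Fin n → (Fin n ⊕ Fin n) → ℤ`, the `Sum.inr` columns being the frozen ones.
-/

namespace GreenSeq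

variable {n : ℕ}

/-- The framed quiver `Q̂ = [B | Iₙ]`. -/
def framedM (B : Fin n → Fin n → ℤ) : Fin n → (Fin n ⊕ Fin n) → ℤ :=
  fun i => Sum.elim (B i) (fun j => if i = j then 1 else 0)

/-- The coframed quiver `Q̌ = [B | −Iₙ]`. -/
def coframedM (B : Fin n → Fin n → ℤ) : Fin n → (Fin n ⊕ Fin n) → ℤ :=
  fun i => Sum.elim (B i) (fun j => if i = j then -1 else 0)

/-- Mutation of an `n × 2n` matrix at a non-frozen index `k`. -/
def mutE (R : Fin n → (Fin n ⊕ Fin n) → ℤ) (k : Fin n) : Fin n → (Fin n ⊕ Fin n) → ℤ :=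
  fun i j =>
    if i = k ∨ j = Sum.inl k then -R i j
    else R i j + max (R i (Sum.inl k)) 0 * max (R k j) 0
               - min (R i (Sum.inl k)) 0 * min (R k j) 0

/-- Iterated mutation along a list of indices (first element mutated first). -/
def mutListE (R : Fin n → (Fin n ⊕ Fin n) → ℤ) (l : List (Fin n)) :
    Fin n → (Fin n ⊕ Fin n) → ℤ :=
  l.foldl mutE R

/-- `Mut(Q̂)`: all matrices obtained from the framed quiver by finite sequences of
mutations. -/
def MutSet (B : Fin n → Fin n → ℤ) : Set (Fin n → (Fin n ⊕ Fin n) → ℤ) :=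
  {R | ∃ l : List (Fin n), R = mutListE (framedM B) l}

/-- A vertex `i` is green in `R` if the `i`-th row of the c-matrix is nonnegative. -/
def IsGreen (R : Fin n → (Fin n ⊕ Fin n) → ℤ) (i : Fin n) : Prop :=
  ∀ j : Fin n, 0 ≤ R i (Sum.inr j)

/-- A vertex `i` is red in `R` if the `i`-th row of the c-matrix is nonpositive. -/
def IsRed (R : Fin n → (Fin n ⊕ Fin n) → ℤ) (i : Fin n) : Prop :=
  ∀ j : Fin n, R i (Sum.inr j) ≤ 0

/-- A green sequence starting from the extended matrix `R`. -/
def IsGreenSeq : (Fin n → (Fin n ⊕ Fin n) → ℤ) → List (Fin n) → Prop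
  | _, [] => True
  | R, k :: l => IsGreen R k ∧ IsGreenSeq (mutE R k) l

/-- A maximal green sequence for the quiver with adjacency matrix `B`. -/
def IsMaxGreenSeq (B : Fin n → Fin n → ℤ) (l : List (Fin n)) : Prop :=
  IsGreenSeq (framedM B) l ∧ ∀ i : Fin n, IsRed (mutListE (framedM B) l) i

/-- Isomorphism of ice quivers: a permutation of the non-frozen vertices carrying `R`
to `R'` and fixing the frozen columns. -/
def IceIso (R R' : Fin n → (Fin n ⊕ Fin n) → ℤ) : Prop :=
  ∃ σ : Equiv.Perm (Fin n),
    (∀ i j : Fin n, R' (σ i) (Sum.inl (σ j)) = R i (Sum.inl j)) ∧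
    (∀ i j : Fin n, R' (σ i) (Sum.inr j) = R i (Sum.inr j))

/-- Mutation of a square exchange matrix at index `k`. -/
def mutSq (B : Fin n → Fin n → ℤ) (k : Fin n) : Fin n → Fin n → ℤ :=
  fun i j =>
    if i = k ∨ j = k then -B i j
    else B i j + max (B i k) 0 * max (B k j) 0 - min (B i k) 0 * min (B k j) 0

/-- Skew-symmetry of the adjacency matrix (the encoding of a cluster quiver). -/
def IsSkew (B : Fin n → Fin n → ℤ) : Prop := ∀ i j : Fin n, B j i = -B i j

/-- A source of the quiver with adjacency matrix `B`. -/
def IsSource (B : Fin n → Fin n → ℤ) (i : Fin n) : Prop := ∀ j : Fin n, 0 ≤ B i j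

/-- `IsSourceSeq B s`: each element of `s` is a source at the time it is mutated. -/
def IsSourceSeq : (Fin n → Fin n → ℤ) → List (Fin n) → Prop
  | _, [] => True
  | B, k :: l => IsSource B k ∧ IsSourceSeq (mutSq B k) l

/-- Acyclicity: some renumbering of the vertices makes `B` nonnegative above the
diagonal. -/
def IsAcyclic (B : Fin n → Fin n → ℤ) : Prop :=
  ∃ σ : Equiv.Perm (Fin n), ∀ i j : Fin n, σ i < σ j → 0 ≤ B i j

/-- Connectivity of the underlying unoriented graph. -/
def IsConnectedQuiver (B : Fin n → Fin n → ℤ) : Prop :=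
  (SimpleGraph.fromRel (fun i j => B i j ≠ 0)).Connected

/-- The Tits form `q(d) = Σ dᵢ² − Σ_{arrows i→j} dᵢ dⱼ` of an acyclic quiver, where the
number of arrows `i → j` is `max (B i j) 0`. -/
def TitsForm (B : Fin n → Fin n → ℤ) (d : Fin n → ℤ) : ℤ :=
  (∑ i, d i ^ 2) - ∑ i, ∑ j, max (B i j) 0 * (d i * d j)

/-- A Dynkin quiver: connected, acyclic, with positive definite Tits form. -/
def IsDynkin (B : Fin n → Fin n → ℤ) : Prop :=
  IsConnectedQuiver B ∧ IsAcyclic B ∧ ∀ d : Fin n → ℤ, d ≠ 0 → 0 < TitsForm B d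

/-- Finite cluster type: some sequence of mutations transforms `B` into the adjacency
matrix of a Dynkin quiver. -/
def FiniteClusterType (B : Fin n → Fin n → ℤ) : Prop :=
  ∃ l : List (Fin n), IsDynkin (l.foldl mutSq B)

/-!
Mutating at a source `k` whose c-row is nonnegative negates that row and changes no other
row of the c-matrix: the correction term `[b_ik]₊[c_kj]₊ − [b_ik]₋[c_kj]₋` vanishes since
`b_ik ≤ 0` and `c_kj ≥ 0`. Hence along a source sequence without repetitions the c-matrix
stays diagonal, with `−1` at the vertices already mutated and `1` at the others, which are
therefore exactly the green ones.
-/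

lemma isSkew_mutSq {B : Fin n → Fin n → ℤ} (h : IsSkew B) (k : Fin n) :
    IsSkew (mutSq B k) := by
  intro i j
  unfold mutSq
  by_cases hk : i = k ∨ j = k
  · rw [if_pos hk.symm, if_pos hk, h i j]
  · rw [if_neg (by tauto), if_neg hk, h i j, h k j, h i k]
    have e₁ : ∀ a : ℤ, max (-a) 0 = -min a 0 := fun a => by omega
    have e₂ : ∀ a : ℤ, min (-a) 0 = -max a 0 := fun a => by omega
    rw [e₁, e₁, e₂, e₂]
    ring

lemma isSkew_foldl_mutSq {B : Fin n → Fin n → ℤ} (h : IsSkew B) (l : List (Fin n)) :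
    IsSkew (l.foldl mutSq B) := by
  induction l generalizing B with
  | nil => exact h
  | cons k l ih => exact ih (isSkew_mutSq h k)

lemma isSourceSeq_append {B : Fin n → Fin n → ℤ} {l₁ l₂ : List (Fin n)} :
    IsSourceSeq B (l₁ ++ l₂) ↔ IsSourceSeq B l₁ ∧ IsSourceSeq (l₁.foldl mutSq B) l₂ := by
  induction l₁ generalizing B with
  | nil => simp [IsSourceSeq]
  | cons k l ih => simp only [List.cons_append, IsSourceSeq, List.foldl_cons, ih, and_assoc]

lemma mutE_inl (R : Fin n → (Fin n ⊕ Fin n) → ℤ) (k : Fin n) :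
    (fun i j => mutE R k i (Sum.inl j)) = mutSq (fun i j => R i (Sum.inl j)) k := by
  funext i j
  simp only [mutE, mutSq, Sum.inl.injEq]

lemma mutListE_inl (R : Fin n → (Fin n ⊕ Fin n) → ℤ) (l : List (Fin n)) :
    (fun i j => mutListE R l i (Sum.inl j)) = l.foldl mutSq (fun i j => R i (Sum.inl j)) := by
  induction l generalizing R with
  | nil => rfl
  | cons k l ih => rw [mutListE, List.foldl_cons, ← mutListE, ih, mutE_inl, List.foldl_cons]

lemma mutListE_framedM_inl (B : Fin n → Fin n → ℤ) (l : List (Fin n)) (i j : Fin n) :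
    mutListE (framedM B) l i (Sum.inl j) = l.foldl mutSq B i j :=
  congrFun (congrFun (mutListE_inl (framedM B) l) i) j

lemma mutE_inr_self (R : Fin n → (Fin n ⊕ Fin n) → ℤ) (k j : Fin n) :
    mutE R k k (Sum.inr j) = -R k (Sum.inr j) := by
  simp [mutE]

lemma mutE_inr_of_ne {R : Fin n → (Fin n ⊕ Fin n) → ℤ} {k i j : Fin n} (hi : i ≠ k)
    (hik : R i (Sum.inl k) ≤ 0) (hkj : 0 ≤ R k (Sum.inr j)) :
    mutE R k i (Sum.inr j) = R i (Sum.inr j) := by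
  simp only [mutE, hi, reduceCtorEq, or_self, if_false, max_eq_right hik, min_eq_right hkj]
  ring

lemma mutListE_append_singleton (R : Fin n → (Fin n ⊕ Fin n) → ℤ) (l : List (Fin n))
    (k : Fin n) : mutListE R (l ++ [k]) = mutE (mutListE R l) k := by
  simp [mutListE]

theorem mutListE_framedM_inr {B : Fin n → Fin n → ℤ} (hskew : IsSkew B) {l : List (Fin n)}
    (hnd : l.Nodup) (hsrc : IsSourceSeq B l) (i j : Fin n) :
    mutListE (framedM B) l i (Sum.inr j) = if i = j then (if i ∈ l then -1 else 1) else 0 := by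
  induction l using List.reverseRecOn generalizing i j with
  | nil => rfl
  | append_singleton l k ih =>
    obtain ⟨hkl, hnd⟩ := (List.nodup_concat l k).mp (List.concat_eq_append ▸ hnd)
    obtain ⟨hsrc, hk, -⟩ := isSourceSeq_append.mp hsrc
    have ih := ih hnd hsrc
    rw [mutListE_append_singleton]
    by_cases hik : i = k
    · subst hik
      rw [mutE_inr_self, ih]
      split_ifs <;> simp_all
    · have hpos : 0 ≤ mutListE (framedM B) l k (Sum.inr j) := by
        rw [ih]; split_ifs <;> simp_all
      rw [mutE_inr_of_ne hik ?_ hpos, ih]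
      · simp [hik]
      · rw [mutListE_framedM_inl, isSkew_foldl_mutSq hskew l k i]
        simpa using hk i

theorem isGreen_mutListE_framedM_iff {B : Fin n → Fin n → ℤ} (hskew : IsSkew B)
    {l : List (Fin n)} (hnd : l.Nodup) (hsrc : IsSourceSeq B l) (i : Fin n) :
    IsGreen (mutListE (framedM B) l) i ↔ i ∉ l := by
  simp only [IsGreen, mutListE_framedM_inr hskew hnd hsrc]
  constructor
  · intro h hi
    simpa [hi] using h i
  · intro hi j
    split_ifs <;> simp_all

lemma mem_take_finRange {m : ℕ} {i : Fin n} :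
    i ∈ (List.finRange n).take m ↔ (i : ℕ) < m := by
  simp [List.mem_take_iff_getElem, Fin.ext_iff]

theorem green_vertices_along_source_numbering_general (n : ℕ) (B : Fin n → Fin n → ℤ)
    (hskew : IsSkew B)
    (hadm : IsSourceSeq B (List.finRange n)) :
    ∀ k : Fin n, ∀ i : Fin n,
      IsGreen (mutListE (framedM B) ((List.finRange n).take (k + 1))) i ↔ k < i := by
  intro k i
  have hsrc : IsSourceSeq B ((List.finRange n).take (k + 1)) := by
    rw [← List.take_append_drop (k + 1) (List.finRange n)] at hadm
    exact (isSourceSeq_append.mp hadm).1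
  rw [isGreen_mutListE_framedM_iff hskew ((List.nodup_finRange n).sublist
    (List.take_sublist _ _)) hsrc, mem_take_finRange, Fin.lt_def]
  omega

/-- if `(1,…,n)` (here: the increasing enumeration of `Fin n`) is an
admissible numbering of the vertices of the acyclic quiver `Q` by sources, then the
green vertices of `R^(k) = μ_k ∘ ⋯ ∘ μ_1 (Q̂)` are exactly `{k+1,…,n}`. -/
theorem green_vertices_along_source_numbering (n : ℕ) (B : Fin n → Fin n → ℤ)
    (hskew : IsSkew B) (hacyc : IsAcyclic B)
    (hadm : IsSourceSeq B (List.finRange n)) :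
    ∀ k : Fin n, ∀ i : Fin n,
      IsGreen (mutListE (framedM B) ((List.finRange n).take (k + 1))) i ↔ k < i :=
  green_vertices_along_source_numbering_general n B hskew hadm

end GreenSeq
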